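/- arXiv:2309.00656 — 4 statements merged into one kernel-verified Lean document; each statement's English description precedes it below -/
import Mathlib

section
/- Generalized Pythagorean inequality for Bregman projections: let Ψ be strictly convex and continuously differentiable on an open convex Ω, let C be a closed convex subset of the closure of Ω, and let Π_C(w) := argmin_{z ∈ C} D_Ψ(z, w) be the Bregman projection of w ∈ Ω. Then for any z ∈ C, D_Ψ(z, w) ≥ D_Ψ(z, Π_C(w)) + D_Ψ(Π_C(w), w). -/
open scoped RealInnerProductSpace

/-- Bregman divergence of `Ψ` with gradient map `g`. -/
noncomputable def breg {n : ℕ} (Ψ : EuclideanSpace ℝ (Fin n) → ℝ)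
    (g : EuclideanSpace ℝ (Fin n) → EuclideanSpace ℝ (Fin n))
    (x y : EuclideanSpace ℝ (Fin n)) : ℝ :=
  Ψ x - Ψ y - ⟪g y, x - y⟫

/-- Generalized Pythagorean inequality for Bregman projections: if `p` is the Bregman
projection of `w` onto the closed convex set `C`, then for all `z ∈ C`,
`D_Ψ(z, w) ≥ D_Ψ(z, p) + D_Ψ(p, w)`. -/
theorem bregman_pythagorean {n : ℕ}
    (Ω : Set (EuclideanSpace ℝ (Fin n))) (hΩo : IsOpen Ω) (hΩc : Convex ℝ Ω)
    (Ψ : EuclideanSpace ℝ (Fin n) → ℝ)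
    (g : EuclideanSpace ℝ (Fin n) → EuclideanSpace ℝ (Fin n))
    (hconv : StrictConvexOn ℝ (closure Ω) Ψ)
    (hgrad : ∀ x ∈ Ω, HasGradientAt Ψ (g x) x)
    (hgcont : ContinuousOn g Ω)
    (C : Set (EuclideanSpace ℝ (Fin n))) (hC : IsClosed C) (hCc : Convex ℝ C)
    (hCΩ : C ⊆ closure Ω)
    (w : EuclideanSpace ℝ (Fin n)) (hw : w ∈ Ω)
    (p : EuclideanSpace ℝ (Fin n)) (hpC : p ∈ C) (hpΩ : p ∈ Ω)
    (hproj : IsMinOn (fun z => breg Ψ g z w) C p)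
    (z : EuclideanSpace ℝ (Fin n)) (hz : z ∈ C) :
    breg Ψ g z p + breg Ψ g p w ≤ breg Ψ g z w := by
  -- the objective has gradient `g p - g w` at `p`
  have hΨp : HasGradientAt Ψ (g p) p := hgrad p hpΩ
  have hlin : HasGradientAt (fun x => ⟪g w, x - w⟫) (g w) p := by
    have h1 : HasFDerivAt (fun x : EuclideanSpace ℝ (Fin n) => ⟪g w, x - w⟫)
        (innerSL ℝ (g w)) p := by
      have : HasFDerivAt (fun x : EuclideanSpace ℝ (Fin n) => ⟪g w, x⟫ - ⟪g w, w⟫)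
          (innerSL ℝ (g w)) p := ((innerSL ℝ (g w)).hasFDerivAt).sub_const _
      exact this.congr_of_eventuallyEq (by
        filter_upwards with x
        simp [inner_sub_right])
    rw [hasGradientAt_iff_hasFDerivAt]
    exact h1
  have hf : HasGradientAt (fun x => breg Ψ g x w) (g p - g w) p := by
    have := (hΨp.sub_const (Ψ w)).sub hlin
    rw [hasGradientAt_iff_hasFDerivAt, map_sub]
    exact this
  have hfd : HasFDerivWithinAt (fun x => breg Ψ g x w)
      (InnerProductSpace.toDual ℝ _ (g p - g w) : _ →L[ℝ] ℝ) C p :=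
    hf.hasFDerivAt.hasFDerivWithinAt
  have hcone : z - p ∈ posTangentConeAt C p :=
    sub_mem_posTangentConeAt_of_segment_subset (hCc.segment_subset hpC hz)
  have hkey : (0 : ℝ) ≤ ⟪g p - g w, z - p⟫ := by
    have h := (hproj.localize).hasFDerivWithinAt_nonneg hfd hcone
    rwa [InnerProductSpace.toDual_apply_apply] at h
  simp only [breg]
  have hcomp : ⟪g p - g w, z - p⟫ = ⟪g p, z - p⟫ - ⟪g w, z - p⟫ := by
    rw [inner_sub_left]
  have h2 : ⟪g w, z - w⟫ = ⟪g w, z - p⟫ + ⟪g w, p - w⟫ := by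
    rw [← inner_add_right]
    congr 1
    abel
  nlinarith [hkey]
end

section
/- Equivalence of stabilized updates: if Ψ^t, Ψ^{t+1} are Legendre on closure(Ω), C ⊆ closure(Ω) is closed convex, and the point ŵ^{t+1} := ∇Ψ^{(t+1)*}(∇Ψ^t(w^t) − ξ^t + ∇Ψ^{t+1}(w^1) − ∇Ψ^t(w^1)) lies in Ω, then the Bregman projection of ŵ^{t+1} onto C with respect to Ψ^{t+1} equals argmin_{w ∈ C} [ ⟨ξ^t, w⟩ + D_{Ψ^t}(w, w^t) + D_{Ψ^{t+1}−Ψ^t}(w, w^1) ]. -/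
open scoped RealInnerProductSpace

/-- Equivalence of stabilized updates: if `wHat ∈ Ω` satisfies
`∇Ψ^{t+1}(wHat) = ∇Ψ^t(w^t) - ξ + ∇Ψ^{t+1}(w¹) - ∇Ψ^t(w¹)`, then the Bregman projection
of `wHat` onto `C` w.r.t. `Ψ^{t+1}` coincides with
`argmin_{w ∈ C} ⟨ξ, w⟩ + D_{Ψ^t}(w, w^t) + D_{Ψ^{t+1} - Ψ^t}(w, w¹)`. -/
theorem stabilized_update_equivalence {n : ℕ}
    (Ω : Set (EuclideanSpace ℝ (Fin n))) (hΩo : IsOpen Ω) (hΩc : Convex ℝ Ω)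
    (Ψt Ψt1 : EuclideanSpace ℝ (Fin n) → ℝ)
    (gt gt1 : EuclideanSpace ℝ (Fin n) → EuclideanSpace ℝ (Fin n))
    -- Legendre assumptions on `Ψ^t` and `Ψ^{t+1}`
    (hconvt : StrictConvexOn ℝ (closure Ω) Ψt) (hconvt1 : StrictConvexOn ℝ (closure Ω) Ψt1)
    (hgradt : ∀ x ∈ Ω, HasGradientAt Ψt (gt x) x)
    (hgradt1 : ∀ x ∈ Ω, HasGradientAt Ψt1 (gt1 x) x)
    (hblowt : ∀ y ∈ closure Ω \ Ω,
      Filter.Tendsto (fun x => ‖gt x‖) (nhdsWithin y Ω) Filter.atTop)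
    (hblowt1 : ∀ y ∈ closure Ω \ Ω,
      Filter.Tendsto (fun x => ‖gt1 x‖) (nhdsWithin y Ω) Filter.atTop)
    (C : Set (EuclideanSpace ℝ (Fin n))) (hC : IsClosed C) (hCc : Convex ℝ C)
    (hCΩ : C ⊆ closure Ω)
    (w1 wt : EuclideanSpace ℝ (Fin n))
    (hw1 : w1 ∈ Ω ∩ C) (hwt : wt ∈ Ω ∩ C)
    (ξ : EuclideanSpace ℝ (Fin n))
    (wHat : EuclideanSpace ℝ (Fin n)) (hwHatΩ : wHat ∈ Ω)
    (hwHat : gt1 wHat = gt wt - ξ + (gt1 w1 - gt w1)) :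
    ∀ p ∈ C,
      IsMinOn (fun z => breg Ψt1 gt1 z wHat) C p ↔
        IsMinOn (fun w => ⟪ξ, w⟫ + breg Ψt gt w wt +
          breg (fun v => Ψt1 v - Ψt v) (fun v => gt1 v - gt v) w w1) C p := by
  intro p hp
  have key : ∀ z, breg Ψt1 gt1 z wHat =
      (⟪ξ, z⟫ + breg Ψt gt z wt +
        breg (fun v => Ψt1 v - Ψt v) (fun v => gt1 v - gt v) z w1) +
      (-Ψt1 wHat + ⟪gt1 wHat, wHat⟫ + Ψt wt - ⟪gt wt, wt⟫ +
        (Ψt1 w1 - Ψt w1) - ⟪gt1 w1 - gt w1, w1⟫) := by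
    intro z
    simp only [breg, hwHat, inner_sub_left, inner_add_left, inner_sub_right]
    ring
  rw [isMinOn_iff, isMinOn_iff]
  constructor <;> intro h x hx <;> have hhx := h x hx <;>
    rw [key x, key p] at * <;> linarith
end

section
/- Shannon entropy stability bound: let Ψ(μ) = Σ_a μ(a) log μ(a) on the simplex over a finite action set A, let μ be a probability vector with positive entries and ℓ ∈ ℝ^A_{≥0}. Then D_{Ψ*}(∇Ψ(μ) − ℓ, ∇Ψ(μ)) ≤ (1/2) Σ_{a∈A} μ(a) ℓ(a)^2. -/
/-- Fenchel conjugate of the negative Shannon entropy (over the nonnegative orthant):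
`Ψ*(y) = Σ_a exp (y a - 1)`. -/
noncomputable def entConj {A : Type*} [Fintype A] (y : A → ℝ) : ℝ :=
  ∑ a, Real.exp (y a - 1)

/-- Bregman divergence of `entConj` (whose gradient at `y` is `a ↦ exp (y a - 1)`). -/
noncomputable def entConjBreg {A : Type*} [Fintype A] (x y : A → ℝ) : ℝ :=
  entConj x - entConj y - ∑ a, Real.exp (y a - 1) * (x a - y a)

lemma exp_neg_key {t : ℝ} (ht : 0 ≤ t) : Real.exp (-t) - 1 + t ≤ t ^ 2 / 2 := by
  have h := Real.quadratic_le_exp_of_nonneg ht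
  have hpos : (0:ℝ) < 1 + t + t ^ 2 / 2 := by nlinarith
  have h2 : Real.exp (-t) ≤ 1 / (1 + t + t ^ 2 / 2) := by
    rw [Real.exp_neg]
    exact one_div_le_one_div_of_le hpos h |>.trans_eq' (by rw [one_div])
  have h3 : 1 / (1 + t + t ^ 2 / 2) ≤ 1 - t + t ^ 2 / 2 := by
    rw [div_le_iff₀ hpos]; nlinarith [sq_nonneg t, sq_nonneg (t^2)]
  linarith

/-- Shannon entropy stability bound: for a positive probability vector `μ` and a
nonnegative loss vector `ℓ`, with `∇Ψ(μ) = (log μ(a) + 1)_a`,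
`D_{Ψ*}(∇Ψ(μ) - ℓ, ∇Ψ(μ)) ≤ (1/2) Σ_a μ(a) ℓ(a)²`. -/
theorem shannon_stability_bound {A : Type*} [Fintype A] [Nonempty A]
    (μ ℓ : A → ℝ) (hμpos : ∀ a, 0 < μ a) (hμsum : ∑ a, μ a = 1)
    (hℓ : ∀ a, 0 ≤ ℓ a) :
    entConjBreg (fun a => (Real.log (μ a) + 1) - ℓ a) (fun a => Real.log (μ a) + 1) ≤
      (1 / 2) * ∑ a, μ a * (ℓ a) ^ 2 := by
  have hexp : ∀ a, Real.exp (Real.log (μ a) + 1 - 1) = μ a := fun a => by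
    rw [add_sub_cancel_right, Real.exp_log (hμpos a)]
  unfold entConjBreg entConj
  rw [← Finset.sum_sub_distrib, ← Finset.sum_sub_distrib, Finset.mul_sum]
  apply Finset.sum_le_sum
  intro a _
  have h1 : Real.log (μ a) + 1 - ℓ a - 1 = Real.log (μ a) - ℓ a := by ring
  rw [h1, hexp a, Real.exp_sub, Real.exp_log (hμpos a)]
  have key := exp_neg_key (hℓ a)
  have := (hμpos a).le
  rw [Real.exp_neg] at key
  have : μ a / Real.exp (ℓ a) - μ a - μ a * (Real.log (μ a) + 1 - ℓ a - (Real.log (μ a) + 1))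
      = μ a * ((Real.exp (ℓ a))⁻¹ - 1 + ℓ a) := by
    field_simp; ring
  rw [this]
  calc μ a * ((Real.exp (ℓ a))⁻¹ - 1 + ℓ a) ≤ μ a * (ℓ a ^ 2 / 2) :=
        mul_le_mul_of_nonneg_left key (hμpos a).le
    _ = 1 / 2 * (μ a * ℓ a ^ 2) := by ring
end

section
/- Optimality of the balanced policy: on a finite tree of information sets, define A^τ(x,a) = 1 + Σ_{x' in the subtree of (x,a)} |A(x')| and A^τ(x) = Σ_{a∈A(x)} A^τ(x,a). The balanced policy μ*(a|x) = A^τ(x,a)/A^τ(x) satisfies, for every information set x, κ(μ* | x) = A^τ(x), and moreover min_{μ^s positive} κ(μ^s | x) = A^τ(x). -/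
/-- A finite tree of information sets (for one player, perfect recall): at each
information set there are `nA + 1` actions, and action `a` leads to `nS a` successor
information sets. -/
inductive InfoTree : Type
  | node : (nA : ℕ) → (nS : Fin (nA + 1) → ℕ) →
      (child : (a : Fin (nA + 1)) → (i : Fin (nS a)) → InfoTree) → InfoTree

namespace InfoTree

/-- A behavioral policy on the subtree rooted at `t`. -/
def Policy : InfoTree → Type
  | node nA nS child =>
      (Fin (nA + 1) → ℝ) × ((a : Fin (nA + 1)) → (i : Fin (nS a)) → Policy (child a i))

/-- A positive (fully mixed) behavioral policy. -/
def PositivePolicy : (t : InfoTree) → Policy t → Prop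
  | node _ _ child, μ =>
      (∀ a, 0 < μ.1 a) ∧ (∑ a, μ.1 a = 1) ∧ ∀ a i, PositivePolicy (child a i) (μ.2 a i)

/-- `A^τ(x) = Σ_a A^τ(x,a)` where `A^τ(x,a) = 1 + Σ_{x' in the subtree of (x,a)} |A(x')|`
is the total number of actions in the subtree. -/
def Atau : InfoTree → ℕ
  | node _ _ child => ∑ a, (1 + ∑ i, Atau (child a i))

/-- The balanced policy `μ*(a|x) = A^τ(x,a) / A^τ(x)`. -/
noncomputable def balanced : (t : InfoTree) → Policy t
  | node nA nS child =>
      ⟨fun a => ((1 + ∑ i, Atau (child a i) : ℕ) : ℝ) /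
          ((∑ a' : Fin (nA + 1), (1 + ∑ i, Atau (child a' i)) : ℕ) : ℝ),
        fun a i => balanced (child a i)⟩

/-- `κ(μˢ | x)` defined via the recursion
`κ(μˢ | x) = max_a (1 / μˢ(a|x)) (1 + Σ_{x' following (x,a)} κ(μˢ | x'))`. -/
noncomputable def kappaRec : (t : InfoTree) → Policy t → ℝ
  | node _ _ child, μs =>
      Finset.univ.sup' Finset.univ_nonempty
        (fun a => (1 / μs.1 a) * (1 + ∑ i, kappaRec (child a i) (μs.2 a i)))

end InfoTree

open InfoTree
/-- Optimality of the balanced policy: `κ(μ* | x) = A^τ(x)`, the balanced policy is a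
positive behavioral policy, and it minimizes `κ(· | x)` among positive sampling policies. -/
theorem balanced_policy_optimal (t : InfoTree) :
    kappaRec t (balanced t) = (Atau t : ℝ) ∧
    PositivePolicy t (balanced t) ∧
    ∀ μs : Policy t, PositivePolicy t μs → (Atau t : ℝ) ≤ kappaRec t μs := by
  induction t with
  | node nA nS child ih =>
    have hS1 : ∀ a : Fin (nA+1), (1:ℝ) ≤ ((1 + ∑ i, Atau (child a i) : ℕ) : ℝ) := by
      intro a; exact_mod_cast Nat.le_add_right 1 _
    have hSpos : ∀ a, (0:ℝ) < ((1 + ∑ i, Atau (child a i) : ℕ) : ℝ) :=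
      fun a => lt_of_lt_of_le one_pos (hS1 a)
    have hTposN : 0 < ∑ a : Fin (nA+1), (1 + ∑ i, Atau (child a i)) :=
      Finset.sum_pos (fun a _ => by omega) Finset.univ_nonempty
    have hTpos : (0:ℝ) < ((∑ a : Fin (nA+1), (1 + ∑ i, Atau (child a i)) : ℕ) : ℝ) := by
      exact_mod_cast hTposN
    have hcast : ∀ a : Fin (nA+1),
        (1 : ℝ) + ∑ i, (Atau (child a i) : ℝ) = ((1 + ∑ i, Atau (child a i) : ℕ) : ℝ) := by
      intro a; push_cast; ring
    refine ⟨?_, ⟨?_, ?_, fun a i => (ih a i).2.1⟩, ?_⟩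
    · show Finset.univ.sup' Finset.univ_nonempty
        (fun a => (1 / (((1 + ∑ i, Atau (child a i) : ℕ) : ℝ) /
          ((∑ a' : Fin (nA + 1), (1 + ∑ i, Atau (child a' i)) : ℕ) : ℝ))) *
          (1 + ∑ i, kappaRec (child a i) (balanced (child a i)))) = _
      have : ∀ a : Fin (nA+1), (1 / (((1 + ∑ i, Atau (child a i) : ℕ) : ℝ) /
          ((∑ a' : Fin (nA + 1), (1 + ∑ i, Atau (child a' i)) : ℕ) : ℝ))) *
          (1 + ∑ i, kappaRec (child a i) (balanced (child a i)))
          = ((Atau (node nA nS child) : ℕ) : ℝ) := by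
        intro a
        have h2 : (1:ℝ) + ∑ i, kappaRec (child a i) (balanced (child a i))
            = ((1 + ∑ i, Atau (child a i) : ℕ) : ℝ) := by
          rw [← hcast a]
          congr 1
          exact Finset.sum_congr rfl fun i _ => (ih a i).1
        rw [h2, Atau]
        field_simp
      rw [Finset.sup'_congr Finset.univ_nonempty rfl fun a _ => this a]
      simp
    · intro a
      exact div_pos (hSpos a) hTpos
    · show ∑ a : Fin (nA+1), ((1 + ∑ i, Atau (child a i) : ℕ) : ℝ) /
          ((∑ a' : Fin (nA + 1), (1 + ∑ i, Atau (child a' i)) : ℕ) : ℝ) = 1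
      have hsum : ∑ a : Fin (nA+1), ((1 + ∑ i, Atau (child a i) : ℕ) : ℝ)
          = ((∑ a : Fin (nA+1), (1 + ∑ i, Atau (child a i)) : ℕ) : ℝ) := by
        push_cast; ring
      rw [← Finset.sum_div, hsum, div_self (ne_of_gt hTpos)]
    · intro μs hμs
      obtain ⟨hpos, hsum, hrec⟩ := hμs
      show ((∑ a : Fin (nA+1), (1 + ∑ i, Atau (child a i)) : ℕ) : ℝ) ≤
        Finset.univ.sup' Finset.univ_nonempty
          (fun a => (1 / μs.1 a) * (1 + ∑ i, kappaRec (child a i) (μs.2 a i)))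
      set K := Finset.univ.sup' Finset.univ_nonempty
          (fun a => (1 / μs.1 a) * (1 + ∑ i, kappaRec (child a i) (μs.2 a i))) with hK
      have hle : ∀ a : Fin (nA+1),
          ((1 + ∑ i, Atau (child a i) : ℕ) : ℝ) ≤ μs.1 a * K := by
        intro a
        have h1 : ((1 + ∑ i, Atau (child a i) : ℕ) : ℝ) ≤
            1 + ∑ i, kappaRec (child a i) (μs.2 a i) := by
          rw [← hcast a]
          gcongr with i _
          exact (ih a i).2.2 _ (hrec a i)
        have h2 : (1 / μs.1 a) * (1 + ∑ i, kappaRec (child a i) (μs.2 a i)) ≤ K := by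
          rw [hK]
          exact Finset.le_sup'
            (fun a => (1 / μs.1 a) * (1 + ∑ i, kappaRec (child a i) (μs.2 a i)))
            (Finset.mem_univ a)
        have h4 : μs.1 a * ((1 / μs.1 a) * (1 + ∑ i, kappaRec (child a i) (μs.2 a i)))
            ≤ μs.1 a * K := mul_le_mul_of_nonneg_left h2 (hpos a).le
        rw [← mul_assoc, mul_one_div_cancel (ne_of_gt (hpos a)), one_mul] at h4
        exact h1.trans h4
      calc ((∑ a : Fin (nA+1), (1 + ∑ i, Atau (child a i)) : ℕ) : ℝ)
          = ∑ a : Fin (nA+1), ((1 + ∑ i, Atau (child a i) : ℕ) : ℝ) := by push_cast; ring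
        _ ≤ ∑ a : Fin (nA+1), μs.1 a * K := Finset.sum_le_sum fun a _ => hle a
        _ = (∑ a, μs.1 a) * K := by rw [Finset.sum_mul]
        _ = K := by rw [hsum, one_mul]
end
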